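/- Let w : (0,1] × S^{N-1} → ℝ be C¹, g(r,θ) := ∂_r w(r,θ) - (γ/r) w(r,θ), and suppose ∫₀¹ (2/r^{2γ-1}) ∫_{S^{N-1}} g²(r,θ) dθ dr ≤ C₂ < ∞ for some γ > 0. Then for every r ∈ (0,1), ∫_{S^{N-1}} w²(r,θ) dθ / r^{2γ} ≤ 2 ∫_{S^{N-1}} w²(1,θ) dθ + 2|log r| · C₂. -/

import Mathlib

open MeasureTheory Metric Set Module Function
open scoped InnerProductSpace

/-!
Since `∂ᵣ (w r⁻ᵞ) = g r⁻ᵞ`, for each `θ` one has `w(r,θ) r⁻ᵞ = w(1,θ) - ∫ᵣ¹ g(s,θ) s⁻ᵞ ds`.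
Splitting `s⁻ᵞ = s^(-1/2) · s^(1/2-γ)`, Cauchy–Schwarz bounds the square of this integral by
`log (1/r) · ∫ᵣ¹ g² s^(1-2γ) ds`; integrating over `θ` and swapping the two integrals (everything is
continuous on the compact set `S^{N-1} × [r,1]`) gives the claim. The sphere has finite
`(N-1)`-dimensional Hausdorff measure because each closed hemisphere is the image of a compact set
under the smooth inverse stereographic projection from the opposite pole.
-/

theorem ContDiff.hausdorffMeasure_image_lt_top {F Y : Type*} [NormedAddCommGroup F]
    [NormedSpace ℝ F] [FiniteDimensional ℝ F] [MeasurableSpace F] [BorelSpace F]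
    [NormedAddCommGroup Y] [NormedSpace ℝ Y] [MeasurableSpace Y] [BorelSpace Y]
    {f : F → Y} (hf : ContDiff ℝ 1 f) {K : Set F} (hK : IsCompact K) :
    μH[finrank ℝ F] (f '' K) < ⊤ := by
  obtain ⟨C, hC⟩ := hf.locallyLipschitz.locallyLipschitzOn.exists_lipschitzOnWith_of_compact hK
  calc μH[finrank ℝ F] (f '' K) ≤ C ^ (finrank ℝ F : ℝ) * μH[finrank ℝ F] K :=
        hC.hausdorffMeasure_image_le (Nat.cast_nonneg _)
    _ < ⊤ := ENNReal.mul_lt_top (by finiteness) hK.measure_lt_top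

section Sphere

variable {E : Type*} [NormedAddCommGroup E] [InnerProductSpace ℝ E] [FiniteDimensional ℝ E]
  [MeasurableSpace E] [BorelSpace E]

theorem hausdorffMeasure_hemisphere_lt_top {v : E} (hv : ‖v‖ = 1) :
    μH[(finrank ℝ E : ℝ) - 1] {x ∈ sphere (0 : E) 1 | ⟪v, x⟫_ℝ ≤ 0} < ⊤ := by
  set H := {x ∈ sphere (0 : E) 1 | ⟪v, x⟫_ℝ ≤ 0}
  have hH : IsCompact H := (isCompact_sphere 0 1).inter_right
    (isClosed_le (f := fun x => ⟪v, x⟫_ℝ) (continuous_const.inner continuous_id) continuous_const)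
  have hHv : H ⊆ {x | innerSL ℝ v x ≠ 1} := fun x hx h => by
    simp only [innerSL_apply_apply] at h; linarith [hx.2]
  have hcover : H ⊆ (stereoInvFunAux v ∘ Subtype.val) '' (stereoToFun v '' H) := by
    rintro x hx
    refine ⟨stereoToFun v x, mem_image_of_mem _ hx, ?_⟩
    have hxv : x ≠ v := fun h => by
      have := hx.2; rw [h, real_inner_self_eq_norm_sq, hv] at this; norm_num at this
    exact congrArg Subtype.val (stereo_left_inv hv (x := ⟨x, hx.1⟩) hxv)
  have hdim : (finrank ℝ E : ℝ) - 1 = finrank ℝ (ℝ ∙ v)ᗮ := by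
    have hv0 : v ≠ 0 := ne_zero_of_norm_ne_zero (hv.trans_ne one_ne_zero)
    rw [← (ℝ ∙ v).finrank_add_finrank_orthogonal, finrank_span_singleton hv0]
    push_cast; ring
  rw [hdim]
  exact (measure_mono hcover).trans_lt
    ((contDiff_stereoInvFunAux.comp (ℝ ∙ v)ᗮ.subtypeL.contDiff).hausdorffMeasure_image_lt_top
      (hH.image_of_continuousOn (continuousOn_stereoToFun.mono hHv)))

theorem hausdorffMeasure_sphere_lt_top :
    μH[(finrank ℝ E : ℝ) - 1] (sphere (0 : E) 1) < ⊤ := by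
  rcases subsingleton_or_nontrivial E with hE | hE
  · simp [sphere_eq_empty_of_subsingleton one_ne_zero]
  obtain ⟨v, hv⟩ := exists_norm_eq E zero_le_one
  have hcover : sphere (0 : E) 1 ⊆
      {x ∈ sphere (0 : E) 1 | ⟪v, x⟫_ℝ ≤ 0} ∪ {x ∈ sphere (0 : E) 1 | ⟪-v, x⟫_ℝ ≤ 0} := by
    intro x hx
    rcases le_total ⟪v, x⟫_ℝ 0 with h | h
    · exact Or.inl ⟨hx, h⟩
    · exact Or.inr ⟨hx, by rw [inner_neg_left]; linarith⟩
  exact (measure_mono hcover).trans_lt ((measure_union_le _ _).trans_lt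
    (ENNReal.add_lt_top.2 ⟨hausdorffMeasure_hemisphere_lt_top hv,
      hausdorffMeasure_hemisphere_lt_top (by rwa [norm_neg])⟩))

end Sphere

theorem sq_integral_mul_le_integral_sq_mul_integral_sq {α : Type*} [MeasurableSpace α]
    {μ : Measure α} {f h : α → ℝ} (hf : Integrable (fun a => f a ^ 2) μ)
    (hh : Integrable (fun a => h a ^ 2) μ) (hfh : Integrable (fun a => f a * h a) μ) :
    (∫ a, f a * h a ∂μ) ^ 2 ≤ (∫ a, f a ^ 2 ∂μ) * ∫ a, h a ^ 2 ∂μ := by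
  -- the quadratic `t ↦ ∫ (t f - h)²` is nonnegative, so its discriminant is nonpositive
  have hquad : ∀ t : ℝ, 0 ≤ (∫ a, f a ^ 2 ∂μ) * (t * t) + (-2 * ∫ a, f a * h a ∂μ) * t +
      ∫ a, h a ^ 2 ∂μ := by
    intro t
    calc (0 : ℝ) ≤ ∫ a, (t * f a - h a) ^ 2 ∂μ := integral_nonneg fun a => sq_nonneg _
      _ = ∫ a, (f a ^ 2 * (t * t) + f a * h a * (-2 * t) + h a ^ 2) ∂μ :=
        integral_congr_ae (ae_of_all _ fun a => by ring)
      _ = _ := by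
        rw [integral_add (f := fun a => f a ^ 2 * (t * t) + f a * h a * (-2 * t))
            ((hf.mul_const _).add (hfh.mul_const _)) hh,
          integral_add (hf.mul_const _) (hfh.mul_const _), integral_mul_const, integral_mul_const]
        ring
  have := discrim_le_zero hquad
  rw [discrim] at this
  linarith

theorem sq_intervalIntegral_mul_rpow_neg_le {a b γ : ℝ} {u : ℝ → ℝ} (ha : 0 < a) (hab : a ≤ b)
    (hu : ContinuousOn u (Icc a b)) :
    (∫ s in a..b, u s * s ^ (-γ)) ^ 2 ≤
      Real.log (b / a) * ∫ s in a..b, u s ^ 2 * s ^ (1 - 2 * γ) := by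
  have hpos : ∀ s ∈ Icc a b, 0 < s := fun s hs => ha.trans_le hs.1
  have hrpow : ∀ e : ℝ, ContinuousOn (fun s : ℝ => s ^ e) (Icc a b) := fun e =>
    continuousOn_id.rpow_const fun s hs => Or.inl (hpos s hs).ne'
  have hint : ∀ {F : ℝ → ℝ}, ContinuousOn F (Icc a b) → Integrable F (volume.restrict (Ioc a b)) :=
    fun hF => (hF.integrableOn_Icc).mono_set Ioc_subset_Icc_self
  -- weight splitting: `u s * s ^ (-γ) = s ^ (-1/2) * (u s * s ^ (1/2 - γ))`
  have hcs := sq_integral_mul_le_integral_sq_mul_integral_sq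
    (f := fun s : ℝ => s ^ (-(1 / 2) : ℝ)) (h := fun s => u s * s ^ (1 / 2 - γ))
    (hint ((hrpow _).pow 2)) (hint ((hu.mul (hrpow _)).pow 2))
    (hint ((hrpow _).mul (hu.mul (hrpow _))))
  rw [intervalIntegral.integral_of_le hab, intervalIntegral.integral_of_le hab,
    ← integral_inv_of_pos ha (ha.trans_le hab), intervalIntegral.integral_of_le hab]
  convert hcs using 2 <;>
    refine setIntegral_congr_fun measurableSet_Ioc fun s hs => ?_ <;>
    have hs0 : 0 < s := hpos s (Ioc_subset_Icc_self hs)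
  · rw [mul_left_comm, ← Real.rpow_add hs0]; ring_nf
  · rw [← Real.rpow_natCast, ← Real.rpow_mul hs0.le]; norm_num [Real.rpow_neg_one]
  · rw [mul_pow, ← Real.rpow_natCast (s ^ _), ← Real.rpow_mul hs0.le]; ring_nf

theorem HasDerivAt.mul_rpow_neg {φ : ℝ → ℝ} {φ' s : ℝ} (γ : ℝ) (hφ : HasDerivAt φ φ' s)
    (hs : 0 < s) : HasDerivAt (fun t => φ t * t ^ (-γ)) ((φ' - γ / s * φ s) * s ^ (-γ)) s := by
  refine (hφ.mul (Real.hasDerivAt_rpow_const (Or.inl hs.ne'))).congr_deriv ?_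
  rw [Real.rpow_sub hs, Real.rpow_one]
  field_simp
  ring

theorem integral_sub_div_mul_rpow_neg_eq_sub_of_hasDerivAt {φ φ' : ℝ → ℝ} {a b : ℝ} (γ : ℝ)
    (ha : 0 < a) (hab : a ≤ b) (hφ : ∀ s ∈ Icc a b, HasDerivAt φ (φ' s) s)
    (hφ' : ContinuousOn φ' (Icc a b)) :
    ∫ s in a..b, (φ' s - γ / s * φ s) * s ^ (-γ) = φ b * b ^ (-γ) - φ a * a ^ (-γ) := by
  have hpos : ∀ s ∈ Icc a b, 0 < s := fun s hs => ha.trans_le hs.1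
  have hφc : ContinuousOn φ (Icc a b) := fun s hs => (hφ s hs).continuousAt.continuousWithinAt
  have hmem : ∀ s ∈ uIcc a b, s ∈ Icc a b := fun s hs => by rwa [uIcc_of_le hab] at hs
  refine intervalIntegral.integral_eq_sub_of_hasDerivAt
    (fun s hs => (hφ s (hmem s hs)).mul_rpow_neg γ (hpos s (hmem s hs)))
    (ContinuousOn.intervalIntegrable ?_)
  rw [uIcc_of_le hab]
  exact (hφ'.sub ((continuousOn_const.div continuousOn_id fun s hs => (hpos s hs).ne').mul hφc)).mul
    (continuousOn_id.rpow_const fun s hs => Or.inl (hpos s hs).ne')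

theorem sq_div_rpow_le_of_hasDerivAt {φ φ' : ℝ → ℝ} {r : ℝ} (γ : ℝ) (hr0 : 0 < r) (hr1 : r ≤ 1)
    (hφ : ∀ s ∈ Icc r 1, HasDerivAt φ (φ' s) s) (hφ' : ContinuousOn φ' (Icc r 1)) :
    φ r ^ 2 / r ^ (2 * γ) ≤
      2 * φ 1 ^ 2 + 2 * |Real.log r| * ∫ s in r..1, (φ' s - γ / s * φ s) ^ 2 * s ^ (1 - 2 * γ) := by
  have hφc : ContinuousOn φ (Icc r 1) := fun s hs => (hφ s hs).continuousAt.continuousWithinAt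
  have hu : ContinuousOn (fun s => φ' s - γ / s * φ s) (Icc r 1) :=
    hφ'.sub ((continuousOn_const.div continuousOn_id fun s hs => (hr0.trans_le hs.1).ne').mul hφc)
  have hftc := integral_sub_div_mul_rpow_neg_eq_sub_of_hasDerivAt γ hr0 hr1 hφ hφ'
  have hcs := sq_intervalIntegral_mul_rpow_neg_le (γ := γ) hr0 hr1 hu
  rw [Real.one_rpow, mul_one] at hftc
  rw [one_div, Real.log_inv, ← abs_of_nonpos (Real.log_nonpos hr0.le hr1)] at hcs
  have hsq : φ r ^ 2 / r ^ (2 * γ) = (φ r * r ^ (-γ)) ^ 2 := by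
    rw [mul_pow, ← Real.rpow_natCast (r ^ _), ← Real.rpow_mul hr0.le,
      show -γ * (2 : ℕ) = -(2 * γ) by push_cast; ring, Real.rpow_neg hr0.le, div_eq_mul_inv]
  generalize ∫ s in r..1, (φ' s - γ / s * φ s) * s ^ (-γ) = I at hftc hcs
  rw [hsq, show φ r * r ^ (-γ) = φ 1 - I by linarith]
  nlinarith [sq_nonneg (φ 1 + I)]

theorem integrable_prod_restrict_of_continuousOn {X Y E : Type*} [TopologicalSpace X]
    [MeasurableSpace X] [OpensMeasurableSpace X] [TopologicalSpace Y] [MeasurableSpace Y]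
    [OpensMeasurableSpace Y] [SecondCountableTopologyEither X Y] [NormedAddCommGroup E]
    {μ : Measure X} {ν : Measure Y} {S : Set X} {T : Set Y} (hS : IsCompact S) (hT : IsCompact T)
    (hSm : MeasurableSet S) (hTm : MeasurableSet T) (hμS : μ S ≠ ⊤) (hνT : ν T ≠ ⊤)
    {f : X × Y → E} (hf : ContinuousOn f (S ×ˢ T)) :
    Integrable f ((μ.restrict S).prod (ν.restrict T)) := by
  have : IsFiniteMeasure (μ.restrict S) := isFiniteMeasure_restrict.2 hμS
  have : IsFiniteMeasure (ν.restrict T) := isFiniteMeasure_restrict.2 hνT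
  rw [← Measure.restrict_restrict_of_subset (μ := μ) subset_rfl,
    ← Measure.restrict_restrict_of_subset (μ := ν) subset_rfl, Measure.prod_restrict]
  exact hf.integrableOn_of_subset_isCompact (hS.prod hT) (hSm.prod hTm) subset_rfl
    (measure_ne_top _ _)

theorem setIntegral_sq_div_rpow_le {X : Type*} [TopologicalSpace X] [MeasurableSpace X]
    [OpensMeasurableSpace X] {μ : Measure X} {S : Set X} (hS : IsCompact S) (hSm : MeasurableSet S)
    (hμS : μ S ≠ ⊤) {w D : ℝ → X → ℝ} (hw : Continuous (uncurry w)) (hD : Continuous (uncurry D))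
    (hder : ∀ s θ, HasDerivAt (w · θ) (D s θ) s) {r : ℝ} (γ : ℝ) (hr0 : 0 < r) (hr1 : r ≤ 1) :
    (∫ θ in S, w r θ ^ 2 ∂μ) / r ^ (2 * γ) ≤ 2 * ∫ θ in S, w 1 θ ^ 2 ∂μ + 2 * |Real.log r| *
      ∫ s in r..1, (∫ θ in S, (D s θ - γ / s * w s θ) ^ 2 ∂μ) * s ^ (1 - 2 * γ) := by
  have : IsFiniteMeasure (μ.restrict S) := isFiniteMeasure_restrict.2 hμS
  set F : X → ℝ → ℝ := fun θ s => (D s θ - γ / s * w s θ) ^ 2 * s ^ (1 - 2 * γ)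
  have hF : Integrable (uncurry F) ((μ.restrict S).prod (volume.restrict (Icc r 1))) := by
    refine integrable_prod_restrict_of_continuousOn hS isCompact_Icc hSm measurableSet_Icc hμS
      (by simp) ?_
    have hpos : ∀ p ∈ S ×ˢ Icc r 1, (p.2 : ℝ) ≠ 0 := fun p hp => (hr0.trans_le hp.2.1).ne'
    exact (((hD.comp continuous_swap).continuousOn.sub ((continuousOn_const.div
      continuous_snd.continuousOn hpos).mul (hw.comp continuous_swap).continuousOn)).pow 2).mul
      (continuous_snd.continuousOn.rpow_const fun p hp => Or.inl (hpos p hp))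
  have hFθ : Integrable (fun θ => ∫ s in Icc r 1, F θ s) (μ.restrict S) := hF.integral_prod_left
  have hint : ∀ s, IntegrableOn (fun θ => w s θ ^ 2) S μ := fun s =>
    ContinuousOn.integrableOn_of_subset_isCompact
      ((hw.comp (continuous_const.prodMk continuous_id)).pow 2).continuousOn hS hSm subset_rfl hμS
  have hJ : ∀ θ, ∫ s in r..1, F θ s = ∫ s in Icc r 1, F θ s := fun θ => by
    rw [intervalIntegral.integral_of_le hr1, integral_Icc_eq_integral_Ioc]
  calc (∫ θ in S, w r θ ^ 2 ∂μ) / r ^ (2 * γ) = ∫ θ in S, w r θ ^ 2 / r ^ (2 * γ) ∂μ :=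
        (integral_div _ _).symm
    _ ≤ ∫ θ in S, (2 * w 1 θ ^ 2 + 2 * |Real.log r| * ∫ s in Icc r 1, F θ s) ∂μ := by
        refine integral_mono ((hint r).div_const _) ((hint 1).const_mul _ |>.add
          (hFθ.const_mul _)) fun θ => ?_
        rw [← hJ]
        exact sq_div_rpow_le_of_hasDerivAt γ hr0 hr1 (fun s _ => hder s θ)
          (hD.comp (continuous_id.prodMk continuous_const)).continuousOn
    _ = 2 * ∫ θ in S, w 1 θ ^ 2 ∂μ + 2 * |Real.log r| * ∫ s in Icc r 1, ∫ θ in S, F θ s ∂μ := by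
        rw [integral_add ((hint 1).const_mul _) (hFθ.const_mul _),
          integral_const_mul, integral_const_mul, integral_integral_swap hF]
    _ = _ := by
        rw [intervalIntegral.integral_of_le hr1, integral_Icc_eq_integral_Ioc]
        simp only [F, integral_mul_const]

theorem intervalIntegral_mul_rpow_le_half_of_setIntegral_le {E : ℝ → ℝ} {r γ C : ℝ} (hr0 : 0 < r)
    (hr1 : r ≤ 1) (hE : ∀ s ∈ Ioo 0 1, 0 ≤ E s)
    (hint : IntegrableOn (fun s => 2 / s ^ (2 * γ - 1) * E s) (Ioo 0 1))
    (hbound : ∫ s in Ioo 0 1, 2 / s ^ (2 * γ - 1) * E s ≤ C) :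
    ∫ s in r..1, E s * s ^ (1 - 2 * γ) ≤ C / 2 := by
  calc ∫ s in r..1, E s * s ^ (1 - 2 * γ)
      = 1 / 2 * ∫ s in Ioo r 1, 2 / s ^ (2 * γ - 1) * E s := by
        rw [intervalIntegral.integral_of_le hr1, integral_Ioc_eq_integral_Ioo,
          ← integral_const_mul]
        refine setIntegral_congr_fun measurableSet_Ioo fun s hs => ?_
        rw [show 1 - 2 * γ = -(2 * γ - 1) by ring, Real.rpow_neg (hr0.trans hs.1).le]
        ring
    _ ≤ 1 / 2 * ∫ s in Ioo 0 1, 2 / s ^ (2 * γ - 1) * E s := by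
        refine mul_le_mul_of_nonneg_left (setIntegral_mono_set hint
          ((ae_restrict_iff' measurableSet_Ioo).2 (ae_of_all _ fun s hs => ?_))
          (Ioo_subset_Ioo_left hr0.le).eventuallyLE) one_half_pos.le
        exact mul_nonneg (div_nonneg zero_le_two (Real.rpow_nonneg hs.1.le _)) (hE s hs)
    _ ≤ C / 2 := by linarith

theorem weighted_sphere_growth (N : ℕ) (γ C₂ : ℝ)
    (w : ℝ → EuclideanSpace ℝ (Fin N) → ℝ)
    (hw : ContDiff ℝ 1 (fun p : ℝ × EuclideanSpace ℝ (Fin N) => w p.1 p.2))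
    (g : ℝ → EuclideanSpace ℝ (Fin N) → ℝ)
    (hg : ∀ r, ∀ θ, g r θ = deriv (fun s => w s θ) r - (γ / r) * w r θ)
    (hint : IntegrableOn
      (fun r : ℝ => (2 / r ^ (2 * γ - 1)) *
        ∫ θ in sphere (0 : EuclideanSpace ℝ (Fin N)) 1, (g r θ) ^ 2 ∂(μH[(N : ℝ) - 1]))
      (Ioo (0 : ℝ) 1))
    (hbound : (∫ r in Ioo (0 : ℝ) 1, (2 / r ^ (2 * γ - 1)) *
        ∫ θ in sphere (0 : EuclideanSpace ℝ (Fin N)) 1, (g r θ) ^ 2 ∂(μH[(N : ℝ) - 1]))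
      ≤ C₂) :
    ∀ r ∈ Ioo (0 : ℝ) 1,
      (∫ θ in sphere (0 : EuclideanSpace ℝ (Fin N)) 1, (w r θ) ^ 2 ∂(μH[(N : ℝ) - 1]))
          / r ^ (2 * γ) ≤
        2 * (∫ θ in sphere (0 : EuclideanSpace ℝ (Fin N)) 1,
              (w 1 θ) ^ 2 ∂(μH[(N : ℝ) - 1])) +
        2 * |Real.log r| * C₂ := by
  rintro r ⟨hr0, hr1⟩
  set μ : Measure (EuclideanSpace ℝ (Fin N)) := μH[(N : ℝ) - 1]
  set S := sphere (0 : EuclideanSpace ℝ (Fin N)) 1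
  have hμS : μ S ≠ ⊤ := by
    simpa [finrank_euclideanSpace_fin] using
      (hausdorffMeasure_sphere_lt_top (E := EuclideanSpace ℝ (Fin N))).ne
  set D : ℝ → EuclideanSpace ℝ (Fin N) → ℝ := fun s θ =>
    fderiv ℝ (fun p : ℝ × EuclideanSpace ℝ (Fin N) => w p.1 p.2) (s, θ) (1, 0)
  have hder : ∀ s θ, HasDerivAt (w · θ) (D s θ) s := fun s θ => by
    have hW := (hw.differentiable one_ne_zero (s, θ)).hasFDerivAt
    exact hW.comp_hasDerivAt s ((hasDerivAt_id s).prodMk (hasDerivAt_const s θ))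
  have hgD : ∀ s θ, D s θ - γ / s * w s θ = g s θ := fun s θ => by rw [hg, (hder s θ).deriv]
  have key := setIntegral_sq_div_rpow_le (isCompact_sphere 0 1) isClosed_sphere.measurableSet hμS
    hw.continuous ((hw.continuous_fderiv one_ne_zero).clm_apply continuous_const) hder γ hr0 hr1.le
  simp only [hgD] at key
  have hradial := intervalIntegral_mul_rpow_le_half_of_setIntegral_le hr0 hr1.le
    (fun s _ => integral_nonneg fun θ => sq_nonneg (g s θ)) hint hbound
  have hradial_nonneg : 0 ≤ ∫ s in r..1, (∫ θ in S, g s θ ^ 2 ∂μ) * s ^ (1 - 2 * γ) :=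
    intervalIntegral.integral_nonneg hr1.le fun s hs => mul_nonneg
      (integral_nonneg fun _ => sq_nonneg _) (Real.rpow_nonneg (hr0.trans_le hs.1).le _)
  refine key.trans ?_
  gcongr
  linarith
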